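/- arXiv:1903.10025 — 2 statements merged into one kernel-verified Lean document; each statement's English description precedes it below -/
import Mathlib

section
/- Let S be a nonempty finite set of points in ℝ^d with center of mass c(S). Then the average, over choices of a center z drawn uniformly from S, of the cost ∑_{x∈S} ‖x − z‖² equals twice the optimal cost: (1/|S|) ∑_{z∈S} ∑_{x∈S} ‖x − z‖² = 2 ∑_{x∈S} ‖x − c(S)‖². (This identity underlies the analysis of the first, uniformly random, center chosen by k-means++.) -/
/-!
Expanding `‖x - z‖² = ‖(x - c) - (z - c)‖²` around the centroid `c` kills the cross terms, since
the deviations `x - c` sum to zero; this gives `∑ₓ ‖x - z‖² = ∑ₓ ‖x - c‖² + |S| ‖z - c‖²`.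
Averaging over `z ∈ S` adds the optimal cost to itself.
-/

/-- The centroid (center of mass) of a finite set of points in `ℝ^d`. -/
noncomputable def centroid {d : ℕ} (S : Finset (EuclideanSpace ℝ (Fin d))) :
    EuclideanSpace ℝ (Fin d) :=
  ((S.card : ℝ)⁻¹) • ∑ x ∈ S, x

section

open Finset

variable {E : Type*}

theorem Finset.sum_sub_inv_card_smul_sum [AddCommGroup E] [Module ℝ E] {s : Finset E}
    (hs : s.Nonempty) : ∑ x ∈ s, (x - (#s : ℝ)⁻¹ • ∑ y ∈ s, y) = 0 := by
  have hcard : (#s : ℝ) ≠ 0 := Nat.cast_ne_zero.mpr hs.card_pos.ne'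
  rw [sum_sub_distrib, sum_const, ← Nat.cast_smul_eq_nsmul ℝ, smul_smul, mul_inv_cancel₀ hcard,
    one_smul, sub_self]

variable [NormedAddCommGroup E] [InnerProductSpace ℝ E] {s : Finset E} {c : E}

theorem Finset.sum_norm_sub_sq_eq_add_of_sum_sub_eq_zero (hc : ∑ x ∈ s, (x - c) = 0) (z : E) :
    ∑ x ∈ s, ‖x - z‖ ^ 2 = ∑ x ∈ s, ‖x - c‖ ^ 2 + #s * ‖z - c‖ ^ 2 := by
  have hcross : ∑ x ∈ s, inner ℝ (x - c) (z - c) = 0 := by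
    rw [← sum_inner, hc, inner_zero_left]
  calc ∑ x ∈ s, ‖x - z‖ ^ 2
      = ∑ x ∈ s, (‖x - c‖ ^ 2 - 2 * inner ℝ (x - c) (z - c) + ‖z - c‖ ^ 2) := by
        refine sum_congr rfl fun x _ => ?_
        rw [← norm_sub_sq_real, sub_sub_sub_cancel_right]
    _ = ∑ x ∈ s, ‖x - c‖ ^ 2 + #s * ‖z - c‖ ^ 2 := by
        rw [sum_add_distrib, sum_sub_distrib, ← mul_sum, hcross, sum_const, nsmul_eq_mul]
        ring

theorem Finset.sum_sum_norm_sub_sq_eq_of_sum_sub_eq_zero (hc : ∑ x ∈ s, (x - c) = 0) :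
    ∑ z ∈ s, ∑ x ∈ s, ‖x - z‖ ^ 2 = 2 * #s * ∑ x ∈ s, ‖x - c‖ ^ 2 := by
  rw [sum_congr rfl fun z _ => sum_norm_sub_sq_eq_add_of_sum_sub_eq_zero hc z, sum_add_distrib,
    sum_const, nsmul_eq_mul, ← mul_sum]
  ring

end

/-- The average, over a center `z` drawn uniformly from a nonempty finite set
`S ⊂ ℝ^d`, of the cost `∑_{x∈S} ‖x − z‖²` equals twice the optimal cost:
`(1/|S|) ∑_{z∈S} ∑_{x∈S} ‖x − z‖² = 2 ∑_{x∈S} ‖x − c(S)‖²`. -/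
theorem avg_sum_sq_dist_eq_two_mul_optimal {d : ℕ}
    (S : Finset (EuclideanSpace ℝ (Fin d))) (hS : S.Nonempty) :
    ((S.card : ℝ)⁻¹) * ∑ z ∈ S, ∑ x ∈ S, ‖x - z‖ ^ 2
      = 2 * ∑ x ∈ S, ‖x - centroid S‖ ^ 2 := by
  have hc : ∑ x ∈ S, (x - centroid S) = 0 := S.sum_sub_inv_card_smul_sum hS
  have hcard : (S.card : ℝ) ≠ 0 := Nat.cast_ne_zero.mpr hS.card_pos.ne'
  rw [Finset.sum_sum_norm_sub_sq_eq_of_sum_sub_eq_zero hc]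
  field_simp
end

section
/- Consider one step of the k-means (Lloyd) algorithm in which a k-clustering S = (S₁, …, S_k) of a finite point set 𝒳 ⊂ ℝ^d, whose current centers are the centroids c(S₁), …, c(S_k), is changed to the k-clustering S′ = (S′₁, …, S′_k) by reassigning each point to (the cluster of) its nearest current center and then moving each center to the centroid of its new cluster. Then, writing φ(S) = ∑_{j=1}^k ∑_{x∈S_j} ‖x − c(S_j)‖² and φ(S′) = ∑_{j=1}^k ∑_{x∈S′_j} ‖x − c(S′_j)‖², the decrease in potential satisfies φ(S) − φ(S′) ≥ ∑_{j=1}^k |S′_j| · ‖c(S′_j) − c(S_j)‖². Formally: if (S_j)_{j=1..k} and (S′_j)_{j=1..k} are two partitions of 𝒳 into (possibly empty, but with each S_j and each S′_j nonempty whenever it appears in the sums) finite sets such that every x ∈ S′_j satisfies ‖x − c(S_j)‖ ≤ ‖x − c(S_i)‖ for all i = 1, …, k, then the above inequality holds, where c(A) denotes the centroid of a nonempty finite set A. -/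
/-!
Split every point's squared distance according to the pair (old cluster `i`, new cluster `j`)
containing it. Reassignment to the nearest old center can only shrink each term, turning
`φ(S)` into an upper bound for `∑ⱼ ∑_{x ∈ S'ⱼ} ‖x - c(Sⱼ)‖²`; the parallel axis theorem
`∑_{x ∈ A} ‖x - z‖² = ∑_{x ∈ A} ‖x - c(A)‖² + |A| ‖c(A) - z‖²` then splits this bound into
`φ(S')` plus the claimed decrease.
-/

open scoped Finset

namespace Finset

theorem sum_eq_sum_sum_inter_of_existsUnique {ι α M : Type*} [Fintype ι] [DecidableEq α]
    [AddCommMonoid M] {X A : Finset α} {P : ι → Finset α} (hA : A ⊆ X)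
    (hP : ∀ x ∈ X, ∃! i, x ∈ P i) (f : α → M) :
    ∑ x ∈ A, f x = ∑ i, ∑ x ∈ A ∩ P i, f x := by
  have hdisj : (↑(univ : Finset ι) : Set ι).PairwiseDisjoint fun i => A ∩ P i := by
    intro i _ j _ hij
    refine disjoint_left.mpr fun x hxi hxj => hij ?_
    have hx := mem_inter.mp hxi
    exact (hP x (hA hx.1)).unique hx.2 (mem_inter.mp hxj).2
  rw [← sum_biUnion hdisj]
  congr 1
  ext x
  simp only [mem_biUnion, mem_univ, true_and, mem_inter, exists_and_left, iff_self_and]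
  exact fun hx => (hP x (hA hx)).exists

end Finset

theorem sum_norm_sub_sq_eq_of_sum_sub_eq_zero {E : Type*} [NormedAddCommGroup E]
    [InnerProductSpace ℝ E] (A : Finset E) {c : E} (hc : ∑ x ∈ A, (x - c) = 0) (z : E) :
    ∑ x ∈ A, ‖x - z‖ ^ 2 = ∑ x ∈ A, ‖x - c‖ ^ 2 + #A * ‖c - z‖ ^ 2 := by
  have hsplit : ∀ x ∈ A,
      ‖x - z‖ ^ 2 = ‖x - c‖ ^ 2 + 2 * inner ℝ (x - c) (c - z) + ‖c - z‖ ^ 2 := fun x _ => by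
    rw [← norm_add_sq_real, sub_add_sub_cancel]
  rw [Finset.sum_congr rfl hsplit, Finset.sum_add_distrib, Finset.sum_add_distrib, ← Finset.mul_sum,
    ← sum_inner, hc, inner_zero_left, mul_zero, add_zero, Finset.sum_const, nsmul_eq_mul]

theorem sum_sub_centroid_eq_zero {d : ℕ} (A : Finset (EuclideanSpace ℝ (Fin d))) :
    ∑ x ∈ A, (x - centroid A) = 0 := by
  rcases A.eq_empty_or_nonempty with rfl | hA
  · exact Finset.sum_empty
  have hcard : (#A : ℝ) ≠ 0 := Nat.cast_ne_zero.mpr hA.card_pos.ne'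
  rw [Finset.sum_sub_distrib, Finset.sum_const, ← Nat.cast_smul_eq_nsmul ℝ, centroid, smul_smul,
    mul_inv_cancel₀ hcard, one_smul, sub_self]

theorem sum_norm_sub_sq_eq_sum_norm_sub_centroid_sq_add {d : ℕ}
    (A : Finset (EuclideanSpace ℝ (Fin d))) (z : EuclideanSpace ℝ (Fin d)) :
    ∑ x ∈ A, ‖x - z‖ ^ 2 = ∑ x ∈ A, ‖x - centroid A‖ ^ 2 + #A * ‖centroid A - z‖ ^ 2 :=
  sum_norm_sub_sq_eq_of_sum_sub_eq_zero A (sum_sub_centroid_eq_zero A) z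

theorem kmeans_step_potential_decrease_general {d k : ℕ}
    (𝒳 : Finset (EuclideanSpace ℝ (Fin d)))
    (S S' : Fin k → Finset (EuclideanSpace ℝ (Fin d)))
    (hSsub : ∀ j, S j ⊆ 𝒳) (hS'sub : ∀ j, S' j ⊆ 𝒳)
    (hSpart : ∀ x ∈ 𝒳, ∃! j : Fin k, x ∈ S j)
    (hS'part : ∀ x ∈ 𝒳, ∃! j : Fin k, x ∈ S' j)
    (hnear : ∀ j : Fin k, ∀ x ∈ S' j, ∀ i : Fin k,
      ‖x - centroid (S j)‖ ≤ ‖x - centroid (S i)‖) :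
    (∑ j : Fin k, ∑ x ∈ S j, ‖x - centroid (S j)‖ ^ 2)
      - (∑ j : Fin k, ∑ x ∈ S' j, ‖x - centroid (S' j)‖ ^ 2)
      ≥ ∑ j : Fin k, ((S' j).card : ℝ) * ‖centroid (S' j) - centroid (S j)‖ ^ 2 := by
  classical
  have hreassign : ∑ j, ∑ x ∈ S' j, ‖x - centroid (S j)‖ ^ 2
      ≤ ∑ i, ∑ x ∈ S i, ‖x - centroid (S i)‖ ^ 2 :=
    calc ∑ j, ∑ x ∈ S' j, ‖x - centroid (S j)‖ ^ 2
        = ∑ i, ∑ j, ∑ x ∈ S i ∩ S' j, ‖x - centroid (S j)‖ ^ 2 := by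
          rw [Finset.sum_comm]
          refine Finset.sum_congr rfl fun j _ => ?_
          simp_rw [Finset.inter_comm (S _) (S' j)]
          exact Finset.sum_eq_sum_sum_inter_of_existsUnique (hS'sub j) hSpart _
      _ ≤ ∑ i, ∑ j, ∑ x ∈ S i ∩ S' j, ‖x - centroid (S i)‖ ^ 2 := by
          gcongr with i _ j _ x hx
          exact hnear j x (Finset.mem_inter.mp hx).2 i
      _ = ∑ i, ∑ x ∈ S i, ‖x - centroid (S i)‖ ^ 2 := by
          refine Finset.sum_congr rfl fun i _ => ?_
          exact (Finset.sum_eq_sum_sum_inter_of_existsUnique (hSsub i) hS'part _).symm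
  have hparallel : ∑ j, ∑ x ∈ S' j, ‖x - centroid (S j)‖ ^ 2
      = ∑ j, ∑ x ∈ S' j, ‖x - centroid (S' j)‖ ^ 2
        + ∑ j, (#(S' j) : ℝ) * ‖centroid (S' j) - centroid (S j)‖ ^ 2 := by
    rw [← Finset.sum_add_distrib]
    exact Finset.sum_congr rfl fun j _ => sum_norm_sub_sq_eq_sum_norm_sub_centroid_sq_add _ _
  linarith

/-- **One k-means (Lloyd) step does not increase the potential, quantitatively.**
If `(S j)` and `(S' j)`, `j = 1, …, k`, are partitions of a finite set
`𝒳 ⊂ ℝ^d` into nonempty clusters, the current centers are the centroids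
`c(S j)`, and `S'` is obtained by reassigning every point of `𝒳` to (the
cluster of) its nearest current center, then
`φ(S) − φ(S') ≥ ∑_j |S'_j| · ‖c(S'_j) − c(S_j)‖²`,
where `φ(S) = ∑_j ∑_{x ∈ S_j} ‖x − c(S_j)‖²`. -/
theorem kmeans_step_potential_decrease {d k : ℕ}
    (𝒳 : Finset (EuclideanSpace ℝ (Fin d)))
    (S S' : Fin k → Finset (EuclideanSpace ℝ (Fin d)))
    (hSsub : ∀ j, S j ⊆ 𝒳) (hS'sub : ∀ j, S' j ⊆ 𝒳)
    (hSpart : ∀ x ∈ 𝒳, ∃! j : Fin k, x ∈ S j)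
    (hS'part : ∀ x ∈ 𝒳, ∃! j : Fin k, x ∈ S' j)
    (hSne : ∀ j, (S j).Nonempty) (hS'ne : ∀ j, (S' j).Nonempty)
    (hnear : ∀ j : Fin k, ∀ x ∈ S' j, ∀ i : Fin k,
      ‖x - centroid (S j)‖ ≤ ‖x - centroid (S i)‖) :
    (∑ j : Fin k, ∑ x ∈ S j, ‖x - centroid (S j)‖ ^ 2)
      - (∑ j : Fin k, ∑ x ∈ S' j, ‖x - centroid (S' j)‖ ^ 2)
      ≥ ∑ j : Fin k, ((S' j).card : ℝ) * ‖centroid (S' j) - centroid (S j)‖ ^ 2 :=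
  kmeans_step_potential_decrease_general 𝒳 S S' hSsub hS'sub hSpart hS'part hnear
end
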